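/- Let A, B be positive semidefinite matrices with A + B invertible, and let U be a unitary that commutes with Π_A and satisfies √A·√B·U = √(√A·B·√A), where B also commutes with Π_A. Then every vector v with √B·v = λ·U·√A·v for some scalar λ (or with √A·v = 0) lies entirely in Null(A) or in supp(A). -/

import Mathlib

open scoped ComplexOrder

open Classical in
/-- The unique positive semidefinite square root of a positive semidefinite matrix
(junk value 0 otherwise). -/
noncomputable def psqrt {n : Type*} [Fintype n] [DecidableEq n] (X : Matrix n n ℂ) :
    Matrix n n ℂ :=
  if h : X.PosSemidef then
    (h.1.eigenvectorUnitary : Matrix n n ℂ) *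
      Matrix.diagonal ((↑) ∘ (fun x : ℝ => √x) ∘ h.1.eigenvalues) *
      (star h.1.eigenvectorUnitary : Matrix n n ℂ)
  else 0

/-- The range (support) of a matrix, i.e. the orthogonal complement of its kernel. -/
noncomputable def msupp {n : Type*} [Fintype n] [DecidableEq n] (X : Matrix n n ℂ) :
    Submodule ℂ (EuclideanSpace ℂ n) :=
  (LinearMap.ker (Matrix.toEuclideanLin X))ᗮ

/-- The kernel of a matrix, as a subspace of Euclidean space. -/
noncomputable def mker {n : Type*} [Fintype n] [DecidableEq n] (X : Matrix n n ℂ) :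
    Submodule ℂ (EuclideanSpace ℂ n) :=
  LinearMap.ker (Matrix.toEuclideanLin X)

/-- The generalized geometric mean M(A,B) = √A · √(√(A⁺) B √(A⁺)) · √A, where Ap
stands for the Moore–Penrose pseudoinverse A⁺ of A. -/
noncomputable def geoMean {n : Type*} [Fintype n] [DecidableEq n]
    (A Ap B : Matrix n n ℂ) : Matrix n n ℂ :=
  psqrt A * psqrt (psqrt Ap * B * psqrt Ap) * psqrt A

/-! Write `S = √A`, `T = √B` and `P = Π_A`. As `ker √A = ker A` and `√A` is self-adjoint, the
range of `√A` is `supp A`, so `P S = S = S P`; and `P` commutes with `T`, a continuous function of `B`. If `T v = λ U S v`, then `w = v - P v` has `S w = 0` and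
`T w = λ (U S v - P U S v) = λ (U S v - U P S v) = 0`, so `w ∈ ker A ∩ ker B = ker (A + B) = 0`
and `v = P v ∈ supp A`. If instead `S v = 0`, then `A v = S (S v) = 0`. -/

open scoped MatrixOrder

theorem mem_range_of_pencil_eigenvector {R M : Type*} [CommRing R] [AddCommGroup M] [Module R M]
    {P S T U : Module.End R M} (hSP : S ∘ₗ P = S) (hPS : P ∘ₗ S = S) (hPT : P ∘ₗ T = T ∘ₗ P)
    (hPU : P ∘ₗ U = U ∘ₗ P) (hST : LinearMap.ker S ⊓ LinearMap.ker T = ⊥) {v : M} {c : R}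
    (hv : T v = c • U (S v)) : v ∈ LinearMap.range P := by
  have hSw : S (v - P v) = 0 := by
    rw [map_sub, ← LinearMap.comp_apply, hSP, sub_self]
  have hTw : T (v - P v) = 0 := by
    have hUS : P (U (S v)) = U (S v) := by
      rw [← LinearMap.comp_apply, hPU, LinearMap.comp_apply, ← LinearMap.comp_apply P, hPS]
    rw [map_sub, ← LinearMap.comp_apply T, ← hPT, LinearMap.comp_apply, hv, map_smul, hUS,
      sub_self]
  have hw : v - P v ∈ LinearMap.ker S ⊓ LinearMap.ker T := ⟨hSw, hTw⟩
  rw [hST, Submodule.mem_bot, sub_eq_zero] at hw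
  exact ⟨v, hw.symm⟩

theorem psqrt_eq_sqrt {n : Type*} [Fintype n] [DecidableEq n] {X : Matrix n n ℂ}
    (hX : X.PosSemidef) : psqrt X = CFC.sqrt X := by
  rw [psqrt, dif_pos hX, CFC.sqrt_eq_real_sqrt X hX.nonneg, cfcₙ_eq_cfc (hf0 := Real.sqrt_zero),
    Matrix.IsHermitian.cfc_eq hX.1]
  rfl

namespace Matrix

variable {𝕜 : Type*} [RCLike 𝕜] {n : Type*} [Fintype n] [DecidableEq n]

theorem isSymmetric_toEuclideanLin_sqrt (A : Matrix n n 𝕜) :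
    (toEuclideanLin (CFC.sqrt A)).IsSymmetric :=
  isSymmetric_toEuclideanLin_iff.mpr (CFC.sqrt_nonneg A).isSelfAdjoint

theorem ker_toEuclideanLin_sqrt {A : Matrix n n 𝕜} (hA : A.PosSemidef) :
    LinearMap.ker (toEuclideanLin (CFC.sqrt A)) = LinearMap.ker (toEuclideanLin A) := by
  rw [← LinearMap.ker_adjoint_comp_self, (isSymmetric_toEuclideanLin_sqrt A).adjoint_eq,
    ← toLpLin_mul_same, CFC.sqrt_mul_sqrt_self A hA.nonneg]

theorem range_toEuclideanLin_sqrt {A : Matrix n n 𝕜} (hA : A.PosSemidef) :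
    LinearMap.range (toEuclideanLin (CFC.sqrt A)) = (LinearMap.ker (toEuclideanLin A))ᗮ := by
  rw [← ker_toEuclideanLin_sqrt hA, ← (isSymmetric_toEuclideanLin_sqrt A).orthogonal_range,
    Submodule.orthogonal_orthogonal]

theorem mul_eq_self_of_range_le {P X : Matrix n n 𝕜} (hP : P * P = P)
    (h : LinearMap.range (toEuclideanLin X) ≤ LinearMap.range (toEuclideanLin P)) :
    P * X = X := by
  refine toEuclideanLin.injective (LinearMap.ext fun x => ?_)
  obtain ⟨z, hz⟩ := h ⟨x, rfl⟩
  rw [toLpLin_mul_same, LinearMap.comp_apply, ← hz, ← LinearMap.comp_apply, ← toLpLin_mul_same,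
    hP]

theorem ker_inf_ker_eq_bot_of_isUnit_add {A B : Matrix n n 𝕜} (hAB : IsUnit (A + B)) :
    LinearMap.ker (toEuclideanLin A) ⊓ LinearMap.ker (toEuclideanLin B) = ⊥ := by
  have hinj : Function.Injective (toEuclideanLin (A + B)) :=
    ((Module.End.isUnit_iff _).mp (hAB.map (toLpLinAlgEquiv 2))).injective
  refine eq_bot_iff.mpr fun x ⟨hA, hB⟩ => hinj ?_
  rw [map_zero, map_add, LinearMap.add_apply, hA, hB, add_zero]

theorem mem_range_of_sqrt_pencil_eigenvector {A B U P : Matrix n n 𝕜} (hA : A.PosSemidef)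
    (hB : B.PosSemidef) (hAB : IsUnit (A + B)) (hP : P.IsHermitian) (hPP : P * P = P)
    (hrange : LinearMap.range (toEuclideanLin P) = (LinearMap.ker (toEuclideanLin A))ᗮ)
    (hBP : B * P = P * B) (hUP : U * P = P * U) {v : EuclideanSpace 𝕜 n} {c : 𝕜}
    (hv : toEuclideanLin (CFC.sqrt B) v = c • toEuclideanLin (U * CFC.sqrt A) v) :
    v ∈ LinearMap.range (toEuclideanLin P) := by
  have hPS : P * CFC.sqrt A = CFC.sqrt A :=
    mul_eq_self_of_range_le hPP (by rw [hrange, range_toEuclideanLin_sqrt hA])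
  have hSP : CFC.sqrt A * P = CFC.sqrt A := by
    have hS : (CFC.sqrt A).IsHermitian := (CFC.sqrt_nonneg A).isSelfAdjoint
    simpa only [conjTranspose_mul, hP.eq, hS.eq] using congrArg conjTranspose hPS
  have hPT : CFC.sqrt B * P = P * CFC.sqrt B := (Commute.cfcₙ_nnreal hBP _).eq
  refine mem_range_of_pencil_eigenvector (S := toEuclideanLin (CFC.sqrt A))
    (T := toEuclideanLin (CFC.sqrt B)) (U := toEuclideanLin U)
    (by rw [← toLpLin_mul_same, hSP]) (by rw [← toLpLin_mul_same, hPS])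
    (by rw [← toLpLin_mul_same, ← hPT, toLpLin_mul_same])
    (by rw [← toLpLin_mul_same, ← hUP, toLpLin_mul_same]) ?_
    (by simpa only [toLpLin_mul_same, LinearMap.comp_apply] using hv)
  rw [ker_toEuclideanLin_sqrt hA, ker_toEuclideanLin_sqrt hB]
  exact ker_inf_ker_eq_bot_of_isUnit_add hAB

end Matrix

theorem pencil_eigenvector_in_null_or_supp_general
    {n : Type*} [Fintype n] [DecidableEq n]
    (A B U PiA : Matrix n n ℂ) (hA : A.PosSemidef) (hB : B.PosSemidef)
    (hAB : IsUnit (A + B))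
    (hherm : PiA.IsHermitian) (hidem : PiA * PiA = PiA)
    (hrange : LinearMap.range (Matrix.toEuclideanLin PiA) = msupp A)
    (hBcomm : B * PiA = PiA * B)
    (hUcomm : U * PiA = PiA * U)
    (v : EuclideanSpace ℂ n)
    (hv : (∃ lam : ℂ, Matrix.toEuclideanLin (psqrt B) v
            = lam • Matrix.toEuclideanLin (U * psqrt A) v) ∨
          Matrix.toEuclideanLin (psqrt A) v = 0) :
    v ∈ mker A ∨ v ∈ msupp A := by
  rw [psqrt_eq_sqrt hA, psqrt_eq_sqrt hB] at hv
  rcases hv with ⟨c, hc⟩ | hsqrt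
  · right
    rw [← hrange]
    exact Matrix.mem_range_of_sqrt_pencil_eigenvector hA hB hAB hherm hidem hrange hBcomm
      hUcomm hc
  · left
    rwa [mker, ← Matrix.ker_toEuclideanLin_sqrt hA]

/-- If B and the unitary U commute with the support projection of A and
√A √B U = √(√A B √A), then every eigenvector of the pencil (√B, U√A)
(including those with √A v = 0) lies entirely in Null(A) or in supp(A). -/
theorem pencil_eigenvector_in_null_or_supp
    {n : Type*} [Fintype n] [DecidableEq n]
    (A B U PiA : Matrix n n ℂ) (hA : A.PosSemidef) (hB : B.PosSemidef)
    (hAB : IsUnit (A + B))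
    (hherm : PiA.IsHermitian) (hidem : PiA * PiA = PiA)
    (hrange : LinearMap.range (Matrix.toEuclideanLin PiA) = msupp A)
    (hBcomm : B * PiA = PiA * B)
    (hU : U ∈ Matrix.unitaryGroup n ℂ) (hUcomm : U * PiA = PiA * U)
    (hpolar : psqrt A * psqrt B * U = psqrt (psqrt A * B * psqrt A))
    (v : EuclideanSpace ℂ n)
    (hv : (∃ lam : ℂ, Matrix.toEuclideanLin (psqrt B) v
            = lam • Matrix.toEuclideanLin (U * psqrt A) v) ∨
          Matrix.toEuclideanLin (psqrt A) v = 0) :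
    v ∈ mker A ∨ v ∈ msupp A :=
  pencil_eigenvector_in_null_or_supp_general A B U PiA hA hB hAB hherm hidem hrange hBcomm hUcomm v
    hv
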